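/- Let A, B, C be elements of an associative unital ℚ-algebra with BA - AB = C and C commuting with A and B. Then for all n, (A+B)^n = ∑_{k=0}^{⌊n/2⌋} M_{n-2k} · (n!/((n-2k)!·k!·2^k)) · C^k, where M_m = ∑_{r=0}^m C(m,r) A^r B^{m-r}. -/

import Mathlib

/-!
Write `M m` for the ordered binomial. Pascal's rule gives `M (m + 1) = A * M m + M m * B`, and
since `x ↦ B * x - x * B` is a derivation sending `A` to the central element `C` and `B` to `0`,
induction gives `B * M (m + 1) - M (m + 1) * B = (m + 1) • (M m * C)`. Hence
`(A + B) * M m = M (m + 1) + m • (M (m - 1) * C)`, so the coefficients of `M (n - 2k) * C ^ k` in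
`(A + B) ^ n` obey `a (n + 1) (k + 1) = a n (k + 1) + (n - 2k) * a n k`. This is the recursion of
the number of `k`-edge matchings on `n` points, which is `n! / ((n - 2k)! k! 2^k)`.
-/

open Finset
open scoped Nat

/-- The number of ways to choose `k` disjoint pairs among `n` points: choose their `2 * k`
endpoints, then one of the `(2 * k - 1)‼` perfect matchings on them. -/
def matchingCount (n k : ℕ) : ℕ := n.choose (2 * k) * (2 * k - 1)‼

namespace matchingCount

@[simp]
lemma zero_right (n : ℕ) : matchingCount n 0 = 1 := by
  simp [matchingCount]

lemma eq_zero_of_lt {n k : ℕ} (h : n < 2 * k) : matchingCount n k = 0 := by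
  simp [matchingCount, Nat.choose_eq_zero_of_lt h]

lemma succ_succ (n k : ℕ) :
    matchingCount (n + 1) (k + 1) = matchingCount n (k + 1) + (n - 2 * k) * matchingCount n k := by
  have hodd : (2 * k + 1)‼ = (2 * k + 1) * (2 * k - 1)‼ := Nat.doubleFactorial_add_one _
  have hpascal : (n + 1).choose (2 * k + 2) = n.choose (2 * k + 1) + n.choose (2 * k + 2) :=
    Nat.choose_succ_succ' n (2 * k + 1)
  simp only [matchingCount, show 2 * (k + 1) = 2 * k + 2 by ring,
    show 2 * k + 2 - 1 = 2 * k + 1 by omega, hpascal, hodd]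
  linear_combination (2 * k - 1)‼ * Nat.choose_succ_right_eq n (2 * k)

lemma factorial_two_mul (k : ℕ) : (2 * k)! = (2 * k - 1)‼ * (2 ^ k * k !) := by
  cases k with
  | zero => rfl
  | succ k =>
    rw [← Nat.doubleFactorial_two_mul, show 2 * (k + 1) = 2 * k + 1 + 1 by ring,
      Nat.factorial_eq_mul_doubleFactorial, mul_comm]
    rfl

lemma mul_factorial {n k : ℕ} (h : 2 * k ≤ n) :
    matchingCount n k * ((n - 2 * k)! * k ! * 2 ^ k) = n ! := by
  rw [← Nat.choose_mul_factorial_mul_factorial h, factorial_two_mul, matchingCount]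
  ring

lemma cast_eq_div {K : Type*} [Field K] [CharZero K] {n k : ℕ} (h : 2 * k ≤ n) :
    (matchingCount n k : K) = n ! / ((n - 2 * k)! * k ! * 2 ^ k) := by
  rw [eq_div_iff (by simp [Nat.factorial_ne_zero])]
  exact_mod_cast mul_factorial h

end matchingCount

section
variable {R : Type*} [Ring R] {A B C : R}

def orderedBinomial (A B : R) (m : ℕ) : R :=
  ∑ r ∈ range (m + 1), m.choose r • (A ^ r * B ^ (m - r))

@[simp]
lemma orderedBinomial_zero (A B : R) : orderedBinomial A B 0 = 1 := by
  simp [orderedBinomial]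

lemma orderedBinomial_succ (A B : R) (m : ℕ) :
    orderedBinomial A B (m + 1) = A * orderedBinomial A B m + orderedBinomial A B m * B := by
  rw [orderedBinomial, sum_choose_succ_nsmul (fun i j => A ^ i * B ^ j), add_comm,
    orderedBinomial, mul_sum, sum_mul]
  congr 1 <;> refine sum_congr rfl fun r hr => ?_
  · rw [mul_smul_comm, pow_succ', mul_assoc]
  · rw [smul_mul_assoc, mul_assoc, ← pow_succ, Nat.sub_add_comm (mem_range_succ_iff.mp hr)]

lemma commute_orderedBinomial (hAC : Commute A C) (hBC : Commute B C) (m : ℕ) :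
    Commute C (orderedBinomial A B m) := by
  induction m with
  | zero => simp
  | succ m ih =>
    rw [orderedBinomial_succ]
    exact (hAC.symm.mul_right ih).add_right (ih.mul_right hBC.symm)

lemma mul_orderedBinomial_succ (hBA : B * A = A * B + C) (hAC : Commute A C)
    (hBC : Commute B C) (m : ℕ) :
    B * orderedBinomial A B (m + 1) =
      orderedBinomial A B (m + 1) * B + (m + 1) • (orderedBinomial A B m * C) := by
  induction m with
  | zero =>
    simp only [orderedBinomial_succ, orderedBinomial_zero, mul_one, one_mul, mul_add, hBA, add_mul]
    abel
  | succ m ih =>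
    set M := orderedBinomial A B m
    set M' := orderedBinomial A B (m + 1)
    have hM' : M' = A * M + M * B := orderedBinomial_succ A B m
    calc B * orderedBinomial A B (m + 2)
        = A * (B * M') + C * M' + (B * M') * B := by
          rw [orderedBinomial_succ, mul_add, ← mul_assoc, hBA, add_mul, mul_assoc, mul_assoc]
      _ = (A * M' + M' * B) * B + M' * C + (m + 1) • ((A * M + M * B) * C) := by
          rw [ih, (commute_orderedBinomial hAC hBC _).eq]
          simp only [mul_add, add_mul, smul_add, mul_smul_comm, smul_mul_assoc, mul_assoc,
            hBC.symm.eq]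
          abel
      _ = orderedBinomial A B (m + 2) * B + (m + 2) • (M' * C) := by
        rw [← hM', ← orderedBinomial_succ, succ_nsmul' _ (m + 1)]
        abel

lemma add_mul_orderedBinomial (hBA : B * A = A * B + C) (hAC : Commute A C)
    (hBC : Commute B C) (m : ℕ) :
    (A + B) * orderedBinomial A B m =
      orderedBinomial A B (m + 1) + m • (orderedBinomial A B (m - 1) * C) := by
  cases m with
  | zero => simp [orderedBinomial_succ]
  | succ m =>
    rw [add_mul, mul_orderedBinomial_succ hBA hAC hBC, orderedBinomial_succ A B (m + 1)]
    abel

theorem add_pow_eq_sum_matchingCount (hBA : B * A = A * B + C) (hAC : Commute A C)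
    (hBC : Commute B C) (n : ℕ) :
    (A + B) ^ n =
      ∑ k ∈ range (n + 1), matchingCount n k • (orderedBinomial A B (n - 2 * k) * C ^ k) := by
  induction n with
  | zero => simp
  | succ n ih =>
    set Y : ℕ → R := fun k => orderedBinomial A B (n + 1 - 2 * k) * C ^ k
    have hstep (k : ℕ) :
        matchingCount n k • ((A + B) * (orderedBinomial A B (n - 2 * k) * C ^ k)) =
          matchingCount n k • Y k + ((n - 2 * k) * matchingCount n k) • Y (k + 1) := by
      by_cases hk : 2 * k ≤ n
      · rw [← mul_assoc, add_mul_orderedBinomial hBA hAC hBC, add_mul, smul_mul_assoc, mul_assoc,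
          ← pow_succ', smul_add, smul_smul, mul_comm (matchingCount n k), ← Nat.sub_add_comm hk,
          show n - 2 * k - 1 = n + 1 - 2 * (k + 1) by omega]
      · simp [matchingCount.eq_zero_of_lt (not_le.mp hk), Nat.sub_eq_zero_of_le (not_le.mp hk).le]
    have hextend : ∑ k ∈ range (n + 1), matchingCount n k • Y k =
        ∑ k ∈ range (n + 2), matchingCount n k • Y k := by
      rw [sum_range_succ _ (n + 1), matchingCount.eq_zero_of_lt (by omega), zero_smul, add_zero]
    calc (A + B) ^ (n + 1)
        = ∑ k ∈ range (n + 1),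
            matchingCount n k • ((A + B) * (orderedBinomial A B (n - 2 * k) * C ^ k)) := by
          rw [pow_succ', ih, mul_sum]
          simp only [mul_smul_comm]
      _ = ∑ k ∈ range (n + 2), matchingCount n k • Y k +
            ∑ k ∈ range (n + 1), ((n - 2 * k) * matchingCount n k) • Y (k + 1) := by
          rw [← hextend, ← sum_add_distrib]
          exact sum_congr rfl fun k _ => hstep k
      _ = ∑ k ∈ range (n + 2), matchingCount (n + 1) k • Y k := by
          rw [sum_range_succ' _ (n + 1), sum_range_succ' (fun k => matchingCount (n + 1) k • Y k),
            add_right_comm, ← sum_add_distrib]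
          simp only [matchingCount.succ_succ, add_smul, matchingCount.zero_right]
end

theorem stmt_12 {𝔄 : Type*} [Ring 𝔄] [Algebra ℚ 𝔄] (A B C : 𝔄)
    (hBA : B * A - A * B = C) (hAC : A * C = C * A) (hBC : B * C = C * B)
    (M : ℕ → 𝔄)
    (hM : ∀ m, M m = ∑ r ∈ Finset.range (m + 1), m.choose r • (A ^ r * B ^ (m - r)))
    (n : ℕ) :
    (A + B) ^ n =
      ∑ k ∈ Finset.range (n / 2 + 1),
        M (n - 2 * k) *
          (((n.factorial : ℚ) / ((n - 2 * k).factorial * k.factorial * 2 ^ k)) • C ^ k) := by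
  obtain rfl : M = orderedBinomial A B := funext hM
  rw [add_pow_eq_sum_matchingCount (eq_add_of_sub_eq' hBA) hAC hBC n, ← sum_subset
    (range_subset_range.mpr (by omega : n / 2 + 1 ≤ n + 1)) fun k _ hk => by
      rw [matchingCount.eq_zero_of_lt (by simp only [mem_range] at hk; omega), zero_smul]]
  refine sum_congr rfl fun k hk => ?_
  rw [mul_smul_comm, ← matchingCount.cast_eq_div (by simp only [mem_range] at hk; omega),
    Nat.cast_smul_eq_nsmul]
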